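/- Let 𝒱 be a variety of groups with instances of nontrivial dominions, and let F = F_∞(𝒱) be the relatively free 𝒱-group of countably infinite rank. Then there exists a subgroup H of F such that H is strictly contained in dom_F^𝒱(H). -/

import Mathlib

/-- A bundled group: a type in universe `u` together with a group structure. -/
structure GroupT : Type (u + 1) where
  carrier : Type u
  [str : Group carrier]

attribute [instance] GroupT.str

/-- A variety of groups: a class of groups closed under isomorphism, subgroups,
homomorphic images, and arbitrary direct products indexed by types in the universe. -/
structure GroupVariety : Type (u + 1) where
  Mem : GroupT.{u} → Prop
  iso_closed : ∀ {G H : GroupT.{u}}, G.carrier ≃* H.carrier → Mem G → Mem H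
  subgroup_closed : ∀ (G : GroupT.{u}) (H : Subgroup G.carrier), Mem G → Mem ⟨H⟩
  quotient_closed : ∀ (G H : GroupT.{u}) (f : G.carrier →* H.carrier),
      Function.Surjective f → Mem G → Mem H
  pi_closed : ∀ (ι : Type u) (f : ι → GroupT.{u}),
      (∀ i, Mem (f i)) → Mem ⟨∀ i, (f i).carrier⟩

/-- A variety is nontrivial if it contains some nontrivial group and
does not contain all groups. -/
def GroupVariety.IsNontrivial (V : GroupVariety.{u}) : Prop :=
  (∃ G : GroupT.{u}, V.Mem G ∧ Nontrivial G.carrier) ∧ ∃ G : GroupT.{u}, ¬ V.Mem G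

/-- The dominion of a subgroup `H` of `G` relative to a class `C` of groups:
all elements of `G` on which any two homomorphisms into a `C`-group agreeing on `H`
must agree. -/
def dominion (C : GroupT.{u} → Prop) (G : Type u) [Group G] (H : Subgroup G) : Set G :=
  {a | ∀ K : GroupT.{u}, C K → ∀ f g : G →* K.carrier, (∀ h ∈ H, f h = g h) → f a = g a}

/-- The product variety `𝒩𝒬`: the class of groups having a normal subgroup in `𝒩`
with quotient in `𝒬`. -/
def ProductVariety (N Q : GroupVariety.{u}) (G : GroupT.{u}) : Prop :=
  ∃ (M : Subgroup G.carrier) (h : M.Normal),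
    N.Mem ⟨M⟩ ∧ (letI := h; Q.Mem ⟨G.carrier ⧸ M⟩)

/-- The verbal subgroup `𝒬(G)`: the intersection of all normal subgroups of `G`
whose quotient lies in `𝒬`. -/
def verbalSubgroup (Q : GroupVariety.{u}) (G : Type u) [Group G] : Subgroup G :=
  ⨅ M ∈ {M : Subgroup G | ∃ h : M.Normal, (letI := h; Q.Mem ⟨G ⧸ M⟩)}, M

/-- A class of groups has instances of nontrivial dominions if there is a group `G`
in the class and a subgroup `H` of `G` strictly contained in its dominion in `G`. -/
def HasNontrivialDominions (C : GroupT.{u} → Prop) : Prop :=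
  ∃ (G : GroupT.{u}) (H : Subgroup G.carrier),
    C G ∧ (H : Set G.carrier) ⊂ dominion C G.carrier H

instance verbalSubgroup_normal (Q : GroupVariety.{u}) (G : Type u) [Group G] :
    (verbalSubgroup Q G).Normal := by
  constructor
  intro x hx g
  simp only [verbalSubgroup, Subgroup.mem_iInf] at hx ⊢
  intro M hM
  exact hM.choose.conj_mem x (hx M hM) g

/-- The relatively free `𝒱`-group on a set `X`: the quotient of the free group on `X`
by the intersection of all normal subgroups with quotient in `𝒱`. -/
def relativelyFree (V : GroupVariety.{u}) (X : Type u) : Type u :=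
  FreeGroup X ⧸ verbalSubgroup V (FreeGroup X)

noncomputable instance (V : GroupVariety.{u}) (X : Type u) : Group (relativelyFree V X) :=
  QuotientGroup.Quotient.group _

/-!
Take `a ∈ dom_G(H) \ H` with `G ∈ 𝒱`. Homomorphisms into a reduced product (germs along the
finite subsets of `G`) show that `a` already lies in the dominion of `H ∩ P` in some finitely
generated `P ≤ G`, and such a `P` is a quotient `π : F_∞(𝒱) → P`.

Dominions pull back along a surjection `π : F → Γ` with `F ∈ 𝒱`. Let `f, g : F → K` agree on
`π⁻¹(H₀)`; replacing them by `(f, id), (g, id) : F → K × F` we may assume a common retraction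
`r`. As `f = g` on `N = ker π`, both images normalise `M = f(N)`, so `f` and `g` descend to
`Γ → N(M)/M` and agree on `H₀`. Hence `f(x)⁻¹ g(x) = f(n)` with `n ∈ N` whenever `π x` is in the
dominion, and applying `r` gives `n = 1`.
-/

universe u

open Subgroup

theorem exists_closure_range_eq_top_of_fg (G : Type*) [Group G] [Group.FG G] :
    ∃ c : ULift.{u} ℕ → G, closure (Set.range c) = ⊤ := by
  obtain ⟨S, hS, hfin⟩ := Group.fg_iff.1 ‹_›
  obtain ⟨c, hc⟩ := (hfin.insert 1).countable.exists_eq_range (Set.insert_nonempty 1 S)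
  refine ⟨c ∘ ULift.down, ?_⟩
  rw [ULift.down_surjective.range_comp, ← hc, closure_insert_one, hS]

section GermHom

variable {ι G M : Type*} [Group G] [Group M] {l : Filter ι} (P : ι → Subgroup G)
  (hP : ∀ x, ∀ᶠ i in l, x ∈ P i)

open scoped Classical in
noncomputable def germHom (φ : ∀ i, P i →* M) : G →* l.Germ M where
  toFun x := ((fun i => if hx : x ∈ P i then φ i ⟨x, hx⟩ else 1 : ι → M) : l.Germ M)
  map_one' := by
    rw [← Filter.Germ.coe_one]
    congr 1
    funext i
    simp only [dif_pos (P i).one_mem]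
    exact map_one (φ i)
  map_mul' x y := by
    rw [← Filter.Germ.coe_mul, Filter.Germ.coe_eq]
    filter_upwards [hP x, hP y] with i hx hy
    simp only [dif_pos hx, dif_pos hy, dif_pos (mul_mem hx hy), Pi.mul_apply, ← map_mul]
    rfl

theorem germHom_eq_germHom {H : Subgroup G} {φ ψ : ∀ i, P i →* M}
    (hφψ : ∀ i, ∀ h ∈ H.subgroupOf (P i), φ i h = ψ i h) {h : G} (hh : h ∈ H) :
    germHom P hP φ h = germHom P hP ψ h := by
  refine congrArg _ (funext fun i => ?_)
  split_ifs with hhi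
  exacts [hφψ i _ (mem_subgroupOf.2 hh), rfl]

theorem eventually_eq_of_germHom_eq {φ ψ : ∀ i, P i →* M} {a : G} (ha : ∀ i, a ∈ P i)
    (h : germHom P hP φ a = germHom P hP ψ a) :
    ∀ᶠ i in l, φ i ⟨a, ha i⟩ = ψ i ⟨a, ha i⟩ :=
  (Filter.Germ.coe_eq.1 h).mono fun i hi => by simpa [dif_pos (ha i)] using hi

end GermHom

theorem subset_dominion {C : GroupT.{u} → Prop} {G : Type u} [Group G] (H : Subgroup G) :
    (H : Set G) ⊆ dominion C G H :=
  fun x hx _K _hK _f _g hfg => hfg x hx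

namespace GroupVariety

variable (V : GroupVariety.{u})

theorem mem_quotient_ker {P K : Type u} [Group P] [Group K] (hK : V.Mem ⟨K⟩) (φ : P →* K) :
    V.Mem ⟨P ⧸ φ.ker⟩ :=
  V.iso_closed (QuotientGroup.quotientKerEquivRange φ).symm (V.subgroup_closed ⟨K⟩ φ.range hK)

theorem verbalSubgroup_le_ker {P K : Type u} [Group P] [Group K] (hK : V.Mem ⟨K⟩) (φ : P →* K) :
    verbalSubgroup V P ≤ φ.ker :=
  iInf₂_le φ.ker ⟨inferInstance, V.mem_quotient_ker hK φ⟩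

theorem mem_quotient_verbalSubgroup (P : Type u) [Group P] :
    V.Mem ⟨P ⧸ verbalSubgroup V P⟩ := by
  let S := {M : Subgroup P | ∃ h : M.Normal, (letI := h; V.Mem ⟨P ⧸ M⟩)}
  have (M : S) : (M : Subgroup P).Normal := M.2.1
  let Φ : P →* ∀ M : S, P ⧸ (M : Subgroup P) := MonoidHom.pi fun M => QuotientGroup.mk' M.1
  have hker : Φ.ker = verbalSubgroup V P := by
    ext x
    simp [Φ, S, verbalSubgroup, funext_iff, MonoidHom.pi_apply, QuotientGroup.eq_one_iff]
  exact V.iso_closed (QuotientGroup.quotientMulEquivOfEq hker)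
    (V.mem_quotient_ker (V.pi_closed S (fun M => ⟨P ⧸ M.1⟩) fun M => M.2.2) Φ)

theorem mem_relativelyFree (X : Type u) : V.Mem ⟨relativelyFree V X⟩ :=
  V.mem_quotient_verbalSubgroup (FreeGroup X)

theorem mem_prod {K L : Type u} [Group K] [Group L] (hK : V.Mem ⟨K⟩) (hL : V.Mem ⟨L⟩) :
    V.Mem ⟨K × L⟩ := by
  let A (b : ULift.{u} Bool) : GroupT.{u} := cond b.down ⟨K⟩ ⟨L⟩
  let e : (∀ b, (A b).carrier) ≃* K × L :=
    { toFun := fun p => (p ⟨true⟩, p ⟨false⟩)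
      invFun := fun x b => Bool.rec (motive := fun c => (A ⟨c⟩).carrier) x.2 x.1 b.down
      left_inv := fun p => funext fun ⟨b⟩ => by cases b <;> rfl
      right_inv := fun _ => rfl
      map_mul' := fun _ _ => rfl }
  exact V.iso_closed e (V.pi_closed _ A fun ⟨b⟩ => by cases b <;> assumption)

theorem mem_germ {ι M : Type u} [Group M] (hM : V.Mem ⟨M⟩) (l : Filter ι) :
    V.Mem ⟨l.Germ M⟩ :=
  V.quotient_closed ⟨ι → M⟩ ⟨l.Germ M⟩ (Filter.Germ.coeMulHom l) Quot.mk_surjective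
    (V.pi_closed ι (fun _ => ⟨M⟩) fun _ => hM)

theorem exists_surjective_relativelyFree {X P : Type u} [Group P] (hP : V.Mem ⟨P⟩) (c : X → P)
    (hc : closure (Set.range c) = ⊤) :
    ∃ π : relativelyFree V X →* P, Function.Surjective π :=
  ⟨QuotientGroup.lift _ (FreeGroup.lift c) (V.verbalSubgroup_le_ker hP _),
    QuotientGroup.lift_surjective_of_surjective _ _ (by
      rw [← MonoidHom.range_eq_top, FreeGroup.range_lift_eq_closure, hc]) _⟩

theorem exists_fg_mem_dominion {G : Type u} [Group G] {H : Subgroup G}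
    {a : G} (ha : a ∈ dominion V.Mem G H) :
    ∃ P : Subgroup G, P.FG ∧ ∃ haP : a ∈ P, ⟨a, haP⟩ ∈ dominion V.Mem P (H.subgroupOf P) := by
  classical
  by_contra! hc
  let P (s : Finset G) : Subgroup G := closure ↑(insert a s)
  have haP (s : Finset G) : a ∈ P s := subset_closure (Finset.mem_insert_self a s)
  have hP (x : G) : ∀ᶠ s in Filter.atTop, x ∈ P s :=
    (Filter.eventually_ge_atTop {x}).mono fun s hs =>
      subset_closure (Finset.mem_insert_of_mem (hs (Finset.mem_singleton_self x)))
  have hwit (s : Finset G) : ∃ K : GroupT.{u}, V.Mem K ∧ ∃ f g : P s →* K.carrier,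
      (∀ h ∈ H.subgroupOf (P s), f h = g h) ∧ f ⟨a, haP s⟩ ≠ g ⟨a, haP s⟩ := by
    simpa [dominion] using hc (P s) ⟨_, rfl⟩ (haP s)
  choose K hK f g hfg hne using hwit
  let φ (s : Finset G) := (MonoidHom.mulSingle (fun s => (K s).carrier) s).comp (f s)
  let ψ (s : Finset G) := (MonoidHom.mulSingle (fun s => (K s).carrier) s).comp (g s)
  have hgerm := ha ⟨_⟩ (V.mem_germ (V.pi_closed _ K hK) Filter.atTop)
    (germHom P hP φ) (germHom P hP ψ) fun h hh =>
      germHom_eq_germHom P hP (fun s h' hh' => by simp [φ, ψ, hfg s h' hh']) hh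
  obtain ⟨s, hs⟩ := (eventually_eq_of_germHom_eq P hP haP hgerm).exists
  exact hne s (Pi.mulSingle_injective s hs)

section Pullback

variable {F Γ : Type u} [Group F] [Group Γ] {π : F →* Γ}

theorem apply_eq_of_retraction {L : Type u} [Group L] (hL : V.Mem ⟨L⟩)
    (hπ : Function.Surjective π) {H₀ : Subgroup Γ} {f g : F →* L}
    (hfg : ∀ x ∈ H₀.comap π, f x = g x) (r : L →* F)
    (hrf : r.comp f = MonoidHom.id F) (hrg : r.comp g = MonoidHom.id F)
    {x : F} (hx : π x ∈ dominion V.Mem Γ H₀) : f x = g x := by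
  have hker : π.ker ≤ H₀.comap π := fun n hn => by
    simp [MonoidHom.mem_ker.1 hn]
  set M := π.ker.map f
  have hMg : π.ker.map g = M := by
    ext y
    constructor <;> rintro ⟨n, hn, rfl⟩ <;> exact ⟨n, hn, by simp [hfg n (hker hn)]⟩
  have hf : f.range ≤ normalizer (M : Set L) := by
    have := le_normalizer_map (H := π.ker) f
    rwa [normalizer_eq_top, ← MonoidHom.range_eq_map] at this
  have hg : g.range ≤ normalizer (M : Set L) := by
    have := le_normalizer_map (H := π.ker) g
    rwa [normalizer_eq_top, ← MonoidHom.range_eq_map, hMg] at this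
  let q := QuotientGroup.mk' (M.subgroupOf (normalizer (M : Set L)))
  let f₁ := q.comp (f.codRestrict _ fun y => hf ⟨y, rfl⟩)
  let g₁ := q.comp (g.codRestrict _ fun y => hg ⟨y, rfl⟩)
  have hf₁ : π.ker ≤ f₁.ker := fun n hn => by
    simpa [f₁, q, QuotientGroup.eq_one_iff, mem_subgroupOf] using ⟨n, hn, rfl⟩
  have hg₁ : π.ker ≤ g₁.ker := fun n hn => by
    simpa [g₁, q, QuotientGroup.eq_one_iff, mem_subgroupOf, ← hMg] using ⟨n, hn, rfl⟩
  have hQ : V.Mem ⟨_ ⧸ M.subgroupOf (normalizer (M : Set L))⟩ :=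
    V.quotient_closed _ _ q (QuotientGroup.mk'_surjective _) (V.subgroup_closed ⟨L⟩ _ hL)
  have hx₁ : f₁ x = g₁ x := by
    have := hx _ hQ (π.liftOfSurjective hπ ⟨f₁, hf₁⟩) (π.liftOfSurjective hπ ⟨g₁, hg₁⟩)
      fun h hh => by
        obtain ⟨y, rfl⟩ := hπ h
        simp [f₁, g₁, hfg y hh]
    simpa using this
  obtain ⟨n, hn, hfn⟩ : (f x)⁻¹ * g x ∈ M := by
    simpa [f₁, g₁, q, QuotientGroup.eq, mem_subgroupOf] using hx₁
  have hn1 : n = 1 := by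
    simpa [← MonoidHom.comp_apply, hrf, hrg] using congrArg r hfn
  rw [hn1, map_one, eq_comm, inv_mul_eq_one] at hfn
  exact hfn

theorem preimage_dominion_subset (hF : V.Mem ⟨F⟩) (hπ : Function.Surjective π)
    (H₀ : Subgroup Γ) : π ⁻¹' dominion V.Mem Γ H₀ ⊆ dominion V.Mem F (H₀.comap π) := by
  intro x hx K hK f g hfg
  have := V.apply_eq_of_retraction (V.mem_prod hK hF) hπ (f := f.prod (.id F))
    (g := g.prod (.id F)) (fun y hy => by simp [hfg y hy]) (MonoidHom.snd _ F)
    (by ext; simp) (by ext; simp) hx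
  exact congrArg Prod.fst this

end Pullback

end GroupVariety

theorem stmt16 (𝒱 : GroupVariety.{u}) (h : HasNontrivialDominions 𝒱.Mem) :
    ∃ H : Subgroup (relativelyFree 𝒱 (ULift.{u} ℕ)),
      (H : Set (relativelyFree 𝒱 (ULift.{u} ℕ))) ⊂
        dominion 𝒱.Mem (relativelyFree 𝒱 (ULift.{u} ℕ)) H := by
  obtain ⟨G, H, hG, hH⟩ := h
  obtain ⟨a, hadom, haH⟩ := Set.exists_of_ssubset hH
  obtain ⟨P, hPfg, haP, hadomP⟩ := 𝒱.exists_fg_mem_dominion hadom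
  have : Group.FG P := (Group.fg_iff_subgroup_fg P).2 hPfg
  obtain ⟨c, hc⟩ := exists_closure_range_eq_top_of_fg P
  obtain ⟨π, hπ⟩ := 𝒱.exists_surjective_relativelyFree (𝒱.subgroup_closed G P hG) c hc
  obtain ⟨a', ha'⟩ := hπ ⟨a, haP⟩
  have ha'dom : π a' ∈ dominion 𝒱.Mem P (H.subgroupOf P) := ha' ▸ hadomP
  refine ⟨(H.subgroupOf P).comap π, (Set.ssubset_iff_of_subset (subset_dominion _)).2
    ⟨a', 𝒱.preimage_dominion_subset (𝒱.mem_relativelyFree _) hπ _ ha'dom, ?_⟩⟩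
  simpa [mem_subgroupOf, ha'] using haH
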